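/- Incompatibility in the example protocol: In the round-based register protocol of Figure 2 (one register per round, visibility range 1, alphabet {d0, a, b}), for every k ≥ 1 the locations (q_4, k) and (q_6, k) are both coverable individually, but they are not compatible: there is no abstract execution σ_init →* σ with both (q_4,k) ∈ S(σ) and (q_6,k) ∈ S(σ). -/
import Mathlib


open scoped Classical

/-- Actions of a round-based register protocol: round increment, read of value `x`
from register `α` of round `k - i`, and write of value `x` to register `α` of the
current round. -/
inductive Act (dim : ℕ) (D : Type) where
  | incr : Act dim D
  | read (i : ℕ) (α : Fin dim) (x : D) : Act dim D
  | write (α : Fin dim) (x : D) : Act dim D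

/-- A round-based register protocol. -/
structure Protocol (Q D : Type) (dim : ℕ) where
  q0 : Q
  d0 : D
  v : ℕ
  T : Set (Q × Act dim D × Q)
  read_le : ∀ q i α x q', (q, Act.read i α x, q') ∈ T → i ≤ v
  write_ne : ∀ q α x q', (q, Act.write α x, q') ∈ T → x ≠ d0

/-- A move: a transition together with the round on which it is performed. -/
abbrev Move (Q D : Type) (dim : ℕ) := (Q × Act dim D × Q) × ℕ

/-- A concrete configuration: a finitely supported multiset of locations and a
valuation of all registers. -/
structure Conc (Q D : Type) (dim : ℕ) where
  loc : (Q × ℕ) →₀ ℕ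
  reg : ℕ → Fin dim → D

variable {Q D : Type} {dim : ℕ}

/-- Value read from register `α` of round `k - i` (registers of negative rounds
hold the initial value). -/
def regVal (P : Protocol Q D dim) (γ : Conc Q D dim) (k i : ℕ) (α : Fin dim) : D :=
  if i ≤ k then γ.reg (k - i) α else P.d0

/-- Updating register `α` of round `k` to value `x`. -/
def updReg (r : ℕ → Fin dim → D) (k : ℕ) (α : Fin dim) (x : D) : ℕ → Fin dim → D :=
  fun k' α' => if k' = k ∧ α' = α then x else r k' α'

/-- Concrete step relation of a round-based register protocol. -/
inductive ConcStep [DecidableEq Q] (P : Protocol Q D dim) :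
    Conc Q D dim → Move Q D dim → Conc Q D dim → Prop where
  | incr {q q' : Q} {k : ℕ} {γ γ' : Conc Q D dim} :
      (q, Act.incr, q') ∈ P.T → 0 < γ.loc (q, k) →
      γ'.loc = γ.loc - Finsupp.single (q, k) 1 + Finsupp.single (q', k + 1) 1 →
      γ'.reg = γ.reg →
      ConcStep P γ ((q, Act.incr, q'), k) γ'
  | read {q q' : Q} {k i : ℕ} {α : Fin dim} {x : D} {γ γ' : Conc Q D dim} :
      (q, Act.read i α x, q') ∈ P.T → 0 < γ.loc (q, k) →
      regVal P γ k i α = x →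
      γ'.loc = γ.loc - Finsupp.single (q, k) 1 + Finsupp.single (q', k) 1 →
      γ'.reg = γ.reg →
      ConcStep P γ ((q, Act.read i α x, q'), k) γ'
  | write {q q' : Q} {k : ℕ} {α : Fin dim} {x : D} {γ γ' : Conc Q D dim} :
      (q, Act.write α x, q') ∈ P.T → 0 < γ.loc (q, k) →
      γ'.loc = γ.loc - Finsupp.single (q, k) 1 + Finsupp.single (q', k) 1 →
      γ'.reg = updReg γ.reg k α x →
      ConcStep P γ ((q, Act.write α x, q'), k) γ'

/-- Concrete reachability. -/
def ConcReach [DecidableEq Q] (P : Protocol Q D dim) : Conc Q D dim → Conc Q D dim → Prop :=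
  Relation.ReflTransGen (fun γ γ' => ∃ m, ConcStep P γ m γ')

/-- Initial concrete configuration with `n` processes. -/
noncomputable def Conc.init [DecidableEq Q] (P : Protocol Q D dim) (n : ℕ) : Conc Q D dim :=
  ⟨Finsupp.single (P.q0, 0) n, fun _ _ => P.d0⟩

/-- Number of processes of a concrete configuration. -/
def Conc.size (γ : Conc Q D dim) : ℕ := γ.loc.sum fun _ n => n

/-- Support of the location multiset of a concrete configuration. -/
def Conc.supp (γ : Conc Q D dim) : Set (Q × ℕ) := {l | 0 < γ.loc l}

/-- The set of non-blank registers of a concrete configuration. -/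
def Conc.nonBlank (P : Protocol Q D dim) (γ : Conc Q D dim) : Set (ℕ × Fin dim) :=
  {r | γ.reg r.1 r.2 ≠ P.d0}

/-- An abstract configuration: a set of locations and a set of written registers. -/
structure Abs (Q : Type) (dim : ℕ) where
  S : Set (Q × ℕ)
  W : Set (ℕ × Fin dim)

/-- Abstract step relation. -/
inductive AbsStep (P : Protocol Q D dim) :
    Abs Q dim → Move Q D dim → Abs Q dim → Prop where
  | incr {σ : Abs Q dim} {q q' : Q} {k : ℕ} :
      (q, Act.incr, q') ∈ P.T → (q, k) ∈ σ.S →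
      AbsStep P σ ((q, Act.incr, q'), k) ⟨σ.S ∪ {(q', k + 1)}, σ.W⟩
  | readBlank {σ : Abs Q dim} {q q' : Q} {k i : ℕ} {α : Fin dim} :
      (q, Act.read i α P.d0, q') ∈ P.T → (q, k) ∈ σ.S →
      (i ≤ k → (k - i, α) ∉ σ.W) →
      AbsStep P σ ((q, Act.read i α P.d0, q'), k) ⟨σ.S ∪ {(q', k)}, σ.W⟩
  | readVal {σ : Abs Q dim} {q q' q1 q2 : Q} {k i : ℕ} {α : Fin dim} {x : D} :
      x ≠ P.d0 → (q, Act.read i α x, q') ∈ P.T → (q, k) ∈ σ.S →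
      i ≤ k → (k - i, α) ∈ σ.W →
      (q1, Act.write α x, q2) ∈ P.T → (q1, k - i) ∈ σ.S → (q2, k - i) ∈ σ.S →
      AbsStep P σ ((q, Act.read i α x, q'), k) ⟨σ.S ∪ {(q', k)}, σ.W⟩
  | write {σ : Abs Q dim} {q q' : Q} {k : ℕ} {α : Fin dim} {x : D} :
      (q, Act.write α x, q') ∈ P.T → (q, k) ∈ σ.S →
      AbsStep P σ ((q, Act.write α x, q'), k) ⟨σ.S ∪ {(q', k)}, σ.W ∪ {(k, α)}⟩

/-- Abstract reachability. -/
def AbsReach (P : Protocol Q D dim) : Abs Q dim → Abs Q dim → Prop :=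
  Relation.ReflTransGen (fun σ σ' => ∃ m, AbsStep P σ m σ')

/-- The initial abstract configuration. -/
def Abs.init (P : Protocol Q D dim) : Abs Q dim := ⟨{(P.q0, 0)}, ∅⟩

/-- Abstract execution along a list of moves. -/
inductive AbsRun (P : Protocol Q D dim) : Abs Q dim → List (Move Q D dim) → Abs Q dim → Prop
  | nil (σ : Abs Q dim) : AbsRun P σ [] σ
  | cons {σ σ' σ'' : Abs Q dim} {m : Move Q D dim} {ms : List (Move Q D dim)} :
      AbsStep P σ m σ' → AbsRun P σ' ms σ'' → AbsRun P σ (m :: ms) σ''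

/-- First-write order of a schedule, given a set of already written registers. -/
noncomputable def fwo (W : Set (ℕ × Fin dim)) : List (Move Q D dim) → List (ℕ × Fin dim)
  | [] => []
  | ((_, Act.write α _, _), k) :: ms =>
      if (k, α) ∈ W then fwo W ms else (k, α) :: fwo (W ∪ {(k, α)}) ms
  | _ :: ms => fwo W ms

/-- Projection of a sequence of registers onto those whose round lies in `[k - v, k]`. -/
def winproj (v k : ℕ) (F : List (ℕ × Fin dim)) : List (ℕ × Fin dim) :=
  F.filter (fun r => decide (k - v ≤ r.1 ∧ r.1 ≤ k))

/-- States of the example protocol of Figure 2. -/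
inductive Q17 where
  | q0 | q1 | q2 | q3 | q4 | q5 | q6 | qerr
deriving DecidableEq

/-- Data alphabet of the example protocol. -/
inductive D17 where
  | d0 | a | b
deriving DecidableEq

/-- Transitions of the example protocol of Figure 2. -/
def T17 : Set (Q17 × Act 1 D17 × Q17) :=
  { (.q0, .incr, .q0),
    (.q0, .write 0 .a, .q1),
    (.q0, .incr, .q2),
    (.q2, .write 0 .a, .q3),
    (.q3, .read 1 0 .d0, .q4),
    (.q2, .read 1 0 .a, .q5),
    (.q5, .read 0 0 .d0, .q6),
    (.q4, .write 0 .b, .q4),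
    (.q6, .read 0 0 .b, .qerr) }

/-- The example round-based register protocol of Figure 2: one register per
round, visibility range 1, alphabet `{d0, a, b}`. -/
def P17 : Protocol Q17 D17 1 where
  q0 := .q0
  d0 := .d0
  v := 1
  T := T17
  read_le := by
    rintro q i α x q' h
    simp only [T17, Set.mem_insert_iff, Set.mem_singleton_iff, Prod.mk.injEq] at h
    rcases h with h|h|h|h|h|h|h|h|h <;> simp_all
  write_ne := by
    rintro q α x q' h
    simp only [T17, Set.mem_insert_iff, Set.mem_singleton_iff, Prod.mk.injEq] at h
    rcases h with h|h|h|h|h|h|h|h|h <;> simp_all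

/-- Key invariant for round `k` in the example protocol. -/
def Inv17 (k : ℕ) (σ : Abs Q17 1) : Prop :=
  ((Q17.q3, k) ∈ σ.S → (k, (0 : Fin 1)) ∈ σ.W) ∧
  ((Q17.q4, k) ∈ σ.S → (k, (0 : Fin 1)) ∈ σ.W) ∧
  ((Q17.q5, k) ∈ σ.S → (k - 1, (0 : Fin 1)) ∈ σ.W) ∧
  ((Q17.q6, k) ∈ σ.S → (k - 1, (0 : Fin 1)) ∈ σ.W) ∧
  ¬ ((Q17.q4, k) ∈ σ.S ∧ (Q17.q6, k) ∈ σ.S)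

/-- Adding a location whose state is not among `q3,…,q6` preserves the invariant
(together with any growth of the written set). -/
lemma inv17_add {k : ℕ} {σ : Abs Q17 1} (hI : Inv17 k σ) (p : Q17 × ℕ)
    (hp : p.1 = Q17.q0 ∨ p.1 = Q17.q1 ∨ p.1 = Q17.q2 ∨ p.1 = Q17.qerr)
    (W' : Set (ℕ × Fin 1)) (hW : σ.W ⊆ W') :
    Inv17 k ⟨σ.S ∪ {p}, W'⟩ := by
  obtain ⟨h3, h4, h5, h6, hne⟩ := hI
  have hnot : ∀ q : Q17, q ≠ Q17.q0 → q ≠ Q17.q1 → q ≠ Q17.q2 → q ≠ Q17.qerr →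
      ∀ j : ℕ, ((q, j) ∈ σ.S ∪ {p} ↔ (q, j) ∈ σ.S) := by
    intro q hq0 hq1 hq2 hqe j
    simp only [Set.mem_union, Set.mem_singleton_iff, or_iff_left_iff_imp]
    intro h
    rcases hp with hp | hp | hp | hp <;> rw [← h] at hp <;> simp_all
  refine ⟨?_, ?_, ?_, ?_, ?_⟩
  · rw [hnot Q17.q3 (by simp) (by simp) (by simp) (by simp)]
    exact fun h => hW (h3 h)
  · rw [hnot Q17.q4 (by simp) (by simp) (by simp) (by simp)]
    exact fun h => hW (h4 h)
  · rw [hnot Q17.q5 (by simp) (by simp) (by simp) (by simp)]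
    exact fun h => hW (h5 h)
  · rw [hnot Q17.q6 (by simp) (by simp) (by simp) (by simp)]
    exact fun h => hW (h6 h)
  · rw [hnot Q17.q4 (by simp) (by simp) (by simp) (by simp),
      hnot Q17.q6 (by simp) (by simp) (by simp) (by simp)]
    exact hne

lemma mem_union_ne {A : Set (Q17 × ℕ)} {q q' : Q17} {j j' : ℕ} (hq : q ≠ q')
    (h : (q, j) ∈ A ∪ {(q', j')}) : (q, j) ∈ A := by
  rcases h with h | h
  · exact h
  · rw [Set.mem_singleton_iff, Prod.mk.injEq] at h
    exact absurd h.1 hq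

lemma mem_union_same {A : Set (Q17 × ℕ)} {q : Q17} {j j' : ℕ}
    (h : (q, j) ∈ A ∪ {(q, j')}) : (q, j) ∈ A ∨ j = j' := by
  rcases h with h | h
  · exact Or.inl h
  · rw [Set.mem_singleton_iff, Prod.mk.injEq] at h
    exact Or.inr h.2

lemma inv17_step {k : ℕ} (hk : 1 ≤ k) {σ σ' : Abs Q17 1} {m : Move Q17 D17 1}
    (hI : Inv17 k σ) (hs : AbsStep P17 σ m σ') : Inv17 k σ' := by
  cases hs with
  | incr ht hm =>
    simp [P17, T17, Prod.mk.injEq] at ht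
    rcases ht with ⟨rfl, rfl⟩ | ⟨rfl, rfl⟩ <;> exact inv17_add hI _ (by simp) _ subset_rfl
  | @readBlank q q' k' i α ht hm hblank =>
    obtain ⟨h3, h4, h5, h6, hne⟩ := hI
    simp [P17, T17, Prod.mk.injEq] at ht
    rcases ht with ⟨rfl, ⟨rfl, rfl⟩, rfl⟩ | ⟨rfl, ⟨rfl, rfl⟩, rfl⟩
    · -- q3 → q4, read 1 d0
      refine ⟨fun h => h3 (mem_union_ne (by simp) h), ?_,
        fun h => h5 (mem_union_ne (by simp) h), fun h => h6 (mem_union_ne (by simp) h), ?_⟩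
      · intro h
        rcases mem_union_same h with h | rfl
        · exact h4 h
        · exact h3 hm
      · rintro ⟨h, h'⟩
        have h6' := h6 (mem_union_ne (by simp) h')
        rcases mem_union_same h with h | rfl
        · exact hne ⟨h, mem_union_ne (by simp) h'⟩
        · exact hblank hk h6'
    · -- q5 → q6, read 0 d0
      refine ⟨fun h => h3 (mem_union_ne (by simp) h), fun h => h4 (mem_union_ne (by simp) h),
        fun h => h5 (mem_union_ne (by simp) h), ?_, ?_⟩
      · intro h
        rcases mem_union_same h with h | rfl
        · exact h6 h
        · exact h5 hm
      · rintro ⟨h, h'⟩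
        have h4' := h4 (mem_union_ne (by simp) h)
        rcases mem_union_same h' with h' | rfl
        · exact hne ⟨mem_union_ne (by simp) h, h'⟩
        · exact hblank (Nat.zero_le _) (by simpa using h4')
  | @readVal q q' qa qb k' i α x hx ht hm hik hW ht2 hm1 hm2 =>
    simp [P17, T17, Prod.mk.injEq] at ht
    have hx' : x ≠ D17.d0 := hx
    rcases ht with ⟨rfl, ⟨rfl, rfl, rfl⟩, rfl⟩ | ⟨rfl, ⟨rfl, rfl, rfl⟩, rfl⟩ |
        ⟨rfl, ⟨rfl, rfl, rfl⟩, rfl⟩ | ⟨rfl, ⟨rfl, rfl, rfl⟩, rfl⟩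
    · exact absurd rfl hx'
    · -- q2 → q5, read 1 a
      obtain ⟨h3, h4, h5, h6, hne⟩ := hI
      refine ⟨fun h => h3 (mem_union_ne (by simp) h), fun h => h4 (mem_union_ne (by simp) h),
        ?_, fun h => h6 (mem_union_ne (by simp) h), ?_⟩
      · intro h
        rcases mem_union_same h with h | rfl
        · exact h5 h
        · exact hW
      · rintro ⟨h, h'⟩
        exact hne ⟨mem_union_ne (by simp) h, mem_union_ne (by simp) h'⟩
    · exact absurd rfl hx'
    · -- q6 → qerr, read 0 b
      exact inv17_add hI _ (by simp) _ subset_rfl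
  | @write q q' k' α x ht hm =>
    simp [P17, T17, Prod.mk.injEq] at ht
    rcases ht with ⟨rfl, ⟨rfl, rfl⟩, rfl⟩ | ⟨rfl, ⟨rfl, rfl⟩, rfl⟩ | ⟨rfl, ⟨rfl, rfl⟩, rfl⟩
    · -- q0 → q1, write a
      exact inv17_add hI _ (by simp) _ Set.subset_union_left
    · -- q2 → q3, write a
      obtain ⟨h3, h4, h5, h6, hne⟩ := hI
      refine ⟨?_, fun h => Set.mem_union_left _ (h4 (mem_union_ne (by simp) h)),
        fun h => Set.mem_union_left _ (h5 (mem_union_ne (by simp) h)),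
        fun h => Set.mem_union_left _ (h6 (mem_union_ne (by simp) h)), ?_⟩
      · intro h
        rcases mem_union_same h with h | rfl
        · exact Set.mem_union_left _ (h3 h)
        · exact Set.mem_union_right _ rfl
      · rintro ⟨h, h'⟩
        exact hne ⟨mem_union_ne (by simp) h, mem_union_ne (by simp) h'⟩
    · -- q4 → q4, write b
      obtain ⟨h3, h4, h5, h6, hne⟩ := hI
      refine ⟨fun h => Set.mem_union_left _ (h3 (mem_union_ne (by simp) h)), ?_,
        fun h => Set.mem_union_left _ (h5 (mem_union_ne (by simp) h)),
        fun h => Set.mem_union_left _ (h6 (mem_union_ne (by simp) h)), ?_⟩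
      · intro h
        rcases mem_union_same h with h | rfl
        · exact Set.mem_union_left _ (h4 h)
        · exact Set.mem_union_left _ (h4 hm)
      · rintro ⟨h, h'⟩
        have h'' := mem_union_ne (by simp) h'
        rcases mem_union_same h with h | rfl
        · exact hne ⟨h, h''⟩
        · exact hne ⟨hm, h''⟩

lemma inv17_reach {k : ℕ} (hk : 1 ≤ k) {σ : Abs Q17 1}
    (h : AbsReach P17 (Abs.init P17) σ) : Inv17 k σ := by
  induction h with
  | refl =>
    refine ⟨?_, ?_, ?_, ?_, ?_⟩ <;> simp [Abs.init, Inv17, P17]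
  | tail _ hstep ih =>
    obtain ⟨m, hstep⟩ := hstep
    exact inv17_step hk ih hstep

lemma mem_T17_1 : (Q17.q0, Act.incr, Q17.q0) ∈ P17.T := by simp [P17, T17]
lemma mem_T17_2 : (Q17.q0, Act.write 0 D17.a, Q17.q1) ∈ P17.T := by simp [P17, T17]
lemma mem_T17_3 : (Q17.q0, Act.incr, Q17.q2) ∈ P17.T := by simp [P17, T17]
lemma mem_T17_4 : (Q17.q2, Act.write 0 D17.a, Q17.q3) ∈ P17.T := by simp [P17, T17]
lemma mem_T17_5 : (Q17.q3, Act.read 1 0 D17.d0, Q17.q4) ∈ P17.T := by simp [P17, T17]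
lemma mem_T17_6 : (Q17.q2, Act.read 1 0 D17.a, Q17.q5) ∈ P17.T := by simp [P17, T17]
lemma mem_T17_7 : (Q17.q5, Act.read 0 0 D17.d0, Q17.q6) ∈ P17.T := by simp [P17, T17]

lemma covers_q0 (j : ℕ) : ∃ σ : Abs Q17 1, AbsReach P17 (Abs.init P17) σ ∧
    (Q17.q0, j) ∈ σ.S ∧ σ.W = ∅ := by
  induction j with
  | zero => exact ⟨Abs.init P17, .refl, by simp [Abs.init, P17], rfl⟩
  | succ n ih =>
    obtain ⟨σ, hr, hm, hw⟩ := ih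
    exact ⟨⟨σ.S ∪ {(Q17.q0, n + 1)}, σ.W⟩, .tail hr ⟨_, AbsStep.incr mem_T17_1 hm⟩,
      by simp, hw⟩

/-- In the example protocol, for every `k ≥ 1`, the locations `(q₄,k)` and
`(q₆,k)` are both coverable individually, but they are not compatible. -/
theorem example_incompatibility (k : ℕ) (hk : 1 ≤ k) :
    (∃ σ : Abs Q17 1, AbsReach P17 (Abs.init P17) σ ∧ (Q17.q4, k) ∈ σ.S) ∧
    (∃ σ : Abs Q17 1, AbsReach P17 (Abs.init P17) σ ∧ (Q17.q6, k) ∈ σ.S) ∧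
    ¬ ∃ σ : Abs Q17 1, AbsReach P17 (Abs.init P17) σ ∧
        (Q17.q4, k) ∈ σ.S ∧ (Q17.q6, k) ∈ σ.S := by
  have hk1 : k - 1 + 1 = k := Nat.succ_pred_eq_of_pos hk
  refine ⟨?_, ?_, ?_⟩
  · -- cover (q4, k)
    obtain ⟨σ, hr, hm, hw⟩ := covers_q0 (k - 1)
    -- incr: q0 → q2 at round k-1
    have hr1 : AbsReach P17 (Abs.init P17) ⟨σ.S ∪ {(Q17.q2, k - 1 + 1)}, σ.W⟩ :=
      .tail hr ⟨_, AbsStep.incr mem_T17_3 hm⟩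
    rw [hk1] at hr1
    set σ1 : Abs Q17 1 := ⟨σ.S ∪ {(Q17.q2, k)}, σ.W⟩
    have hm1 : (Q17.q2, k) ∈ σ1.S := by simp [σ1]
    -- write a at round k : q2 → q3
    have hr2 : AbsReach P17 (Abs.init P17)
        ⟨σ1.S ∪ {(Q17.q3, k)}, σ1.W ∪ {(k, (0 : Fin 1))}⟩ :=
      .tail hr1 ⟨_, AbsStep.write mem_T17_4 hm1⟩
    set σ2 : Abs Q17 1 := ⟨σ1.S ∪ {(Q17.q3, k)}, σ1.W ∪ {(k, (0 : Fin 1))}⟩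
    have hm2 : (Q17.q3, k) ∈ σ2.S := by simp [σ2]
    -- read blank from round k-1 : q3 → q4
    have hblank : 1 ≤ k → (k - 1, (0 : Fin 1)) ∉ σ2.W := by
      intro _
      simp only [σ2, σ1, hw, Set.union_empty, Set.empty_union, Set.mem_singleton_iff,
        Prod.mk.injEq]
      omega
    refine ⟨⟨σ2.S ∪ {(Q17.q4, k)}, σ2.W⟩,
      .tail hr2 ⟨_, AbsStep.readBlank mem_T17_5 hm2 hblank⟩, by simp⟩
  · -- cover (q6, k)
    obtain ⟨σ, hr, hm, hw⟩ := covers_q0 (k - 1)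
    -- write a at round k-1 : q0 → q1
    have hr1 : AbsReach P17 (Abs.init P17)
        ⟨σ.S ∪ {(Q17.q1, k - 1)}, σ.W ∪ {(k - 1, (0 : Fin 1))}⟩ :=
      .tail hr ⟨_, AbsStep.write mem_T17_2 hm⟩
    set σ1 : Abs Q17 1 := ⟨σ.S ∪ {(Q17.q1, k - 1)}, σ.W ∪ {(k - 1, (0 : Fin 1))}⟩
    have hm1 : (Q17.q0, k - 1) ∈ σ1.S := by simp [σ1, hm]
    -- incr : q0 → q2 at round k-1
    have hr2 : AbsReach P17 (Abs.init P17) ⟨σ1.S ∪ {(Q17.q2, k - 1 + 1)}, σ1.W⟩ :=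
      .tail hr1 ⟨_, AbsStep.incr mem_T17_3 hm1⟩
    rw [hk1] at hr2
    set σ2 : Abs Q17 1 := ⟨σ1.S ∪ {(Q17.q2, k)}, σ1.W⟩
    have hm2 : (Q17.q2, k) ∈ σ2.S := by simp [σ2]
    -- read a from round k-1 : q2 → q5
    have hW2 : (k - 1, (0 : Fin 1)) ∈ σ2.W := by simp [σ2, σ1]
    have hr3 : AbsReach P17 (Abs.init P17) ⟨σ2.S ∪ {(Q17.q5, k)}, σ2.W⟩ :=
      .tail hr2 ⟨_, AbsStep.readVal (by simp [P17]) mem_T17_6 hm2 hk hW2 mem_T17_2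
        (by simp [σ2, σ1, hm]) (by simp [σ2, σ1])⟩
    set σ3 : Abs Q17 1 := ⟨σ2.S ∪ {(Q17.q5, k)}, σ2.W⟩
    have hm3 : (Q17.q5, k) ∈ σ3.S := by simp [σ3]
    -- read blank from round k : q5 → q6
    have hblank : 0 ≤ k → (k - 0, (0 : Fin 1)) ∉ σ3.W := by
      intro _
      simp only [σ3, σ2, σ1, hw, Set.union_empty, Set.empty_union, Set.mem_singleton_iff,
        Prod.mk.injEq, Nat.sub_zero]
      omega
    refine ⟨⟨σ3.S ∪ {(Q17.q6, k)}, σ3.W⟩,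
      .tail hr3 ⟨_, AbsStep.readBlank mem_T17_7 hm3 hblank⟩, by simp⟩
  · rintro ⟨σ, hr, h4, h6⟩
    exact (inv17_reach hk hr).2.2.2.2 ⟨h4, h6⟩
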